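/- Fix d ∈ ℕ, L ≥ 0, λ₀ > 0, and a nonnegative sequence σ₁,…,σ_T. Suppose for each t, λ_t ∈ (0,1) satisfies λ_t = d^{2/3}(L+1)^{2/3} / (σ_{1:t} + λ_{0:t})^{1/3}. Define B'({λ_s}_{s=1}^t) = λ_{1:t} + Σ_{τ=1}^t d^{2/3}(L+1)^{2/3}/(σ_{1:τ} + λ_{0:τ})^{1/3}. Then for all t, B'({λ_s}_{s=1}^t) ≤ 2 · min over all nonnegative sequences {λ*_s}_{s=1}^t of B'({λ*_s}_{s=1}^t). -/
import Mathlib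


open Finset

/-- The objective `B'({λ_s}_{s=1}^t) = λ_{1:t} + Σ_{τ=1}^t d^{2/3}(L+1)^{2/3}/(σ_{1:τ} + λ_{0:τ})^{1/3}`,
where `λ_{0:τ} = λ₀ + λ₁ + ⋯ + λ_τ`. -/
noncomputable def lipObjB (d : ℕ) (L lam0 : ℝ) (σ : ℕ → ℝ) (lam : ℕ → ℝ) (t : ℕ) : ℝ :=
  (∑ s ∈ Finset.Icc 1 t, lam s) +
    ∑ τ ∈ Finset.Icc 1 t,
      (d : ℝ) ^ ((2 : ℝ)/3) * (L + 1) ^ ((2 : ℝ)/3) /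
        ((∑ k ∈ Finset.Icc 1 τ, σ k) + (lam0 + ∑ k ∈ Finset.Icc 1 τ, lam k)) ^ ((1 : ℝ)/3)

/-- if each `λ_t ∈ (0,1)` solves the fixed-point equation
`λ_t = d^{2/3}(L+1)^{2/3}/(σ_{1:t} + λ_{0:t})^{1/3}`, then for all `t` the sequence
`{λ_s}` is a 2-approximation of the best nonnegative sequence for the objective `B'`. -/
theorem stmt3 (d T : ℕ) (L lam0 : ℝ) (hL : 0 ≤ L) (hlam0 : 0 < lam0)
    (σ lam : ℕ → ℝ) (hσ : ∀ t, 1 ≤ t → t ≤ T → 0 ≤ σ t)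
    (hlam : ∀ t, 1 ≤ t → t ≤ T → lam t ∈ Set.Ioo (0 : ℝ) 1 ∧
      lam t = (d : ℝ) ^ ((2 : ℝ)/3) * (L + 1) ^ ((2 : ℝ)/3) /
        ((∑ k ∈ Finset.Icc 1 t, σ k) + (lam0 + ∑ k ∈ Finset.Icc 1 t, lam k)) ^ ((1 : ℝ)/3)) :
    ∀ t, 1 ≤ t → t ≤ T →
      ∀ μ : ℕ → ℝ, (∀ s, 1 ≤ s → s ≤ t → 0 ≤ μ s) →
        lipObjB d L lam0 σ lam t ≤ 2 * lipObjB d L lam0 σ μ t := by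
  have hC0 : (0:ℝ) ≤ (d : ℝ) ^ ((2 : ℝ)/3) * (L + 1) ^ ((2 : ℝ)/3) :=
    mul_nonneg (Real.rpow_nonneg (Nat.cast_nonneg d) _) (Real.rpow_nonneg (by linarith) _)
  have hσsum : ∀ τ, τ ≤ T → 0 ≤ ∑ k ∈ Finset.Icc 1 τ, σ k := by
    intro τ hτ
    apply Finset.sum_nonneg
    intro k hk
    simp only [Finset.mem_Icc] at hk
    exact hσ k hk.1 (hk.2.trans hτ)
  have hDpos : ∀ (ν : ℕ → ℝ) τ, τ ≤ T → (∀ s, 1 ≤ s → s ≤ τ → 0 ≤ ν s) →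
      0 < (∑ k ∈ Finset.Icc 1 τ, σ k) + (lam0 + ∑ k ∈ Finset.Icc 1 τ, ν k) := by
    intro ν τ hτ hν
    have h1 : 0 ≤ ∑ k ∈ Finset.Icc 1 τ, ν k := by
      apply Finset.sum_nonneg
      intro k hk
      simp only [Finset.mem_Icc] at hk
      exact hν k hk.1 hk.2
    have := hσsum τ hτ
    linarith
  have hterm : ∀ (ν : ℕ → ℝ) τ, τ ≤ T → (∀ s, 1 ≤ s → s ≤ τ → 0 ≤ ν s) →
      0 ≤ (d : ℝ) ^ ((2 : ℝ)/3) * (L + 1) ^ ((2 : ℝ)/3) /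
        ((∑ k ∈ Finset.Icc 1 τ, σ k) + (lam0 + ∑ k ∈ Finset.Icc 1 τ, ν k)) ^ ((1 : ℝ)/3) := by
    intro ν τ hτ hν
    exact div_nonneg hC0 (Real.rpow_nonneg (hDpos ν τ hτ hν).le _)
  -- key: λ_{1:u} ≤ B'(ν) for any nonnegative ν
  have key : ∀ u, u ≤ T → ∀ ν : ℕ → ℝ, (∀ s, 1 ≤ s → s ≤ u → 0 ≤ ν s) →
      (∑ s ∈ Finset.Icc 1 u, lam s) ≤ lipObjB d L lam0 σ ν u := by
    intro u
    induction u with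
    | zero => intro _ ν _; simp [lipObjB]
    | succ n ih =>
      intro hnT ν hν
      have hnT' : n ≤ T := (Nat.le_succ n).trans hnT
      have hν' : ∀ s, 1 ≤ s → s ≤ n → 0 ≤ ν s := fun s h1 h2 => hν s h1 (h2.trans (Nat.le_succ n))
      have IH := ih hnT' ν hν'
      have h1n : 1 ≤ n + 1 := Nat.succ_le_succ (Nat.zero_le n)
      have hsplit : ∀ f : ℕ → ℝ, ∑ s ∈ Finset.Icc 1 (n+1), f s = (∑ s ∈ Finset.Icc 1 n, f s) + f (n+1) := by
        intro f; exact Finset.sum_Icc_succ_top h1n f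
      have hobj : lipObjB d L lam0 σ ν (n+1) = lipObjB d L lam0 σ ν n + ν (n+1) +
          (d : ℝ) ^ ((2 : ℝ)/3) * (L + 1) ^ ((2 : ℝ)/3) /
            ((∑ k ∈ Finset.Icc 1 (n+1), σ k) + (lam0 + ∑ k ∈ Finset.Icc 1 (n+1), ν k)) ^ ((1 : ℝ)/3) := by
        simp only [lipObjB, hsplit]
        ring
      rw [hsplit lam, hobj]
      by_cases hcase : (∑ s ∈ Finset.Icc 1 (n+1), lam s) ≤ ∑ s ∈ Finset.Icc 1 (n+1), ν s
      · -- Λ ≤ M, and all the C-terms in lipObjB are nonnegative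
        have hterms : 0 ≤ ∑ τ ∈ Finset.Icc 1 (n+1),
            (d : ℝ) ^ ((2 : ℝ)/3) * (L + 1) ^ ((2 : ℝ)/3) /
              ((∑ k ∈ Finset.Icc 1 τ, σ k) + (lam0 + ∑ k ∈ Finset.Icc 1 τ, ν k)) ^ ((1 : ℝ)/3) := by
          apply Finset.sum_nonneg
          intro τ hτ
          simp only [Finset.mem_Icc] at hτ
          exact hterm ν τ (hτ.2.trans hnT) (fun s h1 h2 => hν s h1 (h2.trans hτ.2))
        have : lipObjB d L lam0 σ ν (n+1) ≥ ∑ s ∈ Finset.Icc 1 (n+1), ν s := by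
          simp only [lipObjB]; linarith
        rw [← hobj, hsplit lam] at *
        linarith [hcase]
      · push_neg at hcase
        -- lam (n+1) ≤ last term
        have hfix := hlam (n+1) h1n hnT
        have hlast : lam (n+1) ≤ (d : ℝ) ^ ((2 : ℝ)/3) * (L + 1) ^ ((2 : ℝ)/3) /
            ((∑ k ∈ Finset.Icc 1 (n+1), σ k) + (lam0 + ∑ k ∈ Finset.Icc 1 (n+1), ν k)) ^ ((1 : ℝ)/3) := by
          rw [hfix.2]
          have hlampos : ∀ s, 1 ≤ s → s ≤ n+1 → 0 ≤ lam s := fun s h1 h2 =>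
            (hlam s h1 (h2.trans hnT)).1.1.le
          have hDν := hDpos ν (n+1) hnT hν
          have hDlam := hDpos lam (n+1) hnT hlampos
          apply div_le_div_of_nonneg_left hC0 (Real.rpow_pos_of_pos hDν _)
          apply Real.rpow_le_rpow hDν.le _ (by norm_num)
          rw [hsplit lam, hsplit ν] at hcase ⊢
          linarith
        have := hν (n+1) h1n le_rfl
        linarith
  intro t ht1 htT μ hμ
  have heq : lipObjB d L lam0 σ lam t = 2 * ∑ s ∈ Finset.Icc 1 t, lam s := by
    have : (∑ τ ∈ Finset.Icc 1 t,
        (d : ℝ) ^ ((2 : ℝ)/3) * (L + 1) ^ ((2 : ℝ)/3) /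
          ((∑ k ∈ Finset.Icc 1 τ, σ k) + (lam0 + ∑ k ∈ Finset.Icc 1 τ, lam k)) ^ ((1 : ℝ)/3))
        = ∑ s ∈ Finset.Icc 1 t, lam s := by
      apply Finset.sum_congr rfl
      intro τ hτ
      simp only [Finset.mem_Icc] at hτ
      exact ((hlam τ hτ.1 (hτ.2.trans htT)).2).symm
    simp only [lipObjB, this]; ring
  rw [heq]
  have := key t htT μ hμ
  linarith
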